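/- Let r₀ > 0, D₂ > 0 and fix r̄ ≥ r₀. Then the function t ↦ ∫₀^{r̄} f_{r,t}(x) dx is nonincreasing on (0, ∞); equivalently, if Z_t = μ + √(2·D₂·t)·W with W a standard Gaussian vector in ℝ³ and ‖μ‖ = r₀, the probability P( ‖Z_t‖ ≤ r̄ ) is a nonincreasing function of t > 0. -/

import Mathlib

/-!
With `σ = √(4 D₂ t)` the density is `x / (r₀ √π σ) · (exp (-((x - r₀)/σ)²) - exp (-((x + r₀)/σ)²))`,
which integrates in closed form through the Gaussian primitive `∫₀^y exp (-v²)`. Differentiating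
the closed form in `σ` at `x = r̄`, with `a = (r̄ - r₀)/σ` and `b = (r̄ + r₀)/σ`, gives
`((1 + b(a + b)) e^{-b²} - (1 + a(a + b)) e^{-a²}) / (2 r₀ √π)`, which is `≤ 0` for `0 ≤ a ≤ b`
because `e^{b² - a²} ≥ 1 + b² - a²`.
-/

open MeasureTheory Real

/-- The density of the distance between transmitter and receiver at time `t`. -/
noncomputable def fdist (r₀ D₂ t x : ℝ) : ℝ :=
  if 0 < x then
    x / (r₀ * Real.sqrt (π * D₂ * t)) * Real.exp (-(x ^ 2 + r₀ ^ 2) / (4 * D₂ * t))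
      * Real.sinh (r₀ * x / (2 * D₂ * t))
  else 0

noncomputable def gaussPrimitive (y : ℝ) : ℝ := ∫ v in (0 : ℝ)..y, exp (-v ^ 2)

lemma hasDerivAt_gaussPrimitive (y : ℝ) : HasDerivAt gaussPrimitive (exp (-y ^ 2)) y := by
  have hc : Continuous fun v : ℝ => exp (-v ^ 2) := by fun_prop
  exact (intervalIntegral.integral_hasStrictDerivAt_right (hc.intervalIntegrable _ _)
    (hc.stronglyMeasurableAtFilter _ _) hc.continuousAt).hasDerivAt

lemma gaussPrimitive_neg (y : ℝ) : gaussPrimitive (-y) = -gaussPrimitive y := by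
  have h := intervalIntegral.integral_comp_neg (a := 0) (b := y) fun v => exp (-v ^ 2)
  simp only [neg_sq, neg_zero] at h
  rw [gaussPrimitive, intervalIntegral.integral_symm, gaussPrimitive, h]

lemma one_add_mul_add_mul_exp_neg_sq_le {a b : ℝ} (ha : 0 ≤ a) (hab : a ≤ b) :
    (1 + b * (a + b)) * exp (-b ^ 2) ≤ (1 + a * (a + b)) * exp (-a ^ 2) := by
  have hexp : exp (-a ^ 2) = exp (b ^ 2 - a ^ 2) * exp (-b ^ 2) := by
    rw [← exp_add]; ring_nf
  -- `(1 + a (a + b)) (1 + b² - a²) - (1 + b (a + b)) = a (a + b)² (b - a)`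
  have hpoly : 1 + b * (a + b) ≤ (1 + a * (a + b)) * (b ^ 2 - a ^ 2 + 1) := by
    nlinarith [mul_nonneg (mul_nonneg ha (sq_nonneg (a + b))) (sub_nonneg.2 hab)]
  rw [hexp, ← mul_assoc]
  gcongr
  exact hpoly.trans (by gcongr; exacts [by nlinarith, add_one_le_exp _])

/-- `x ↦ ∫₀ˣ fdist r₀ D₂ t` in closed form, with `σ = √(4 D₂ t)`;
`gaussPrimitive` is `(√π / 2) erf`. -/
noncomputable def distanceCdf (r₀ σ x : ℝ) : ℝ :=
  (σ / (2 * r₀) * (exp (-((x + r₀) / σ) ^ 2) - exp (-((x - r₀) / σ) ^ 2))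
    + gaussPrimitive ((x - r₀) / σ) + gaussPrimitive ((x + r₀) / σ)) / √π

noncomputable def distanceDensity (r₀ σ x : ℝ) : ℝ :=
  x / (r₀ * √π * σ) * (exp (-((x - r₀) / σ) ^ 2) - exp (-((x + r₀) / σ) ^ 2))

lemma distanceCdf_zero (r₀ σ : ℝ) : distanceCdf r₀ σ 0 = 0 := by
  rw [distanceCdf, zero_sub, neg_div, gaussPrimitive_neg, neg_sq, zero_add]
  ring

lemma hasDerivAt_distanceCdf {r₀ σ : ℝ} (hr₀ : r₀ ≠ 0) (hσ : σ ≠ 0) (x : ℝ) :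
    HasDerivAt (distanceCdf r₀ σ) (distanceDensity r₀ σ x) x := by
  have hlin (c : ℝ) : HasDerivAt (fun x : ℝ => (x + c) / σ) σ⁻¹ x := by
    simpa using ((hasDerivAt_id x).add_const c).div_const σ
  have hexp (c : ℝ) : HasDerivAt (fun x : ℝ => exp (-((x + c) / σ) ^ 2))
      (exp (-((x + c) / σ) ^ 2) * -(2 * ((x + c) / σ) * σ⁻¹)) x := by
    simpa using ((hlin c).fun_pow 2).fun_neg.exp
  have hgauss (c : ℝ) : HasDerivAt (fun x : ℝ => gaussPrimitive ((x + c) / σ))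
      (exp (-((x + c) / σ) ^ 2) * σ⁻¹) x :=
    (hasDerivAt_gaussPrimitive _).comp x (hlin c)
  have h := (((((hexp r₀).fun_sub (hexp (-r₀))).const_mul (σ / (2 * r₀))).fun_add
    (hgauss (-r₀))).fun_add (hgauss r₀)).div_const √π
  simp only [← sub_eq_add_neg] at h
  refine h.congr_deriv ?_
  have hπ : √π ≠ 0 := (sqrt_pos.2 pi_pos).ne'
  unfold distanceDensity
  field_simp
  ring

lemma fdist_eq_distanceDensity {r₀ D₂ t x : ℝ} (hD₂ : 0 < D₂) (ht : 0 < t) (hx : 0 ≤ x) :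
    fdist r₀ D₂ t x = distanceDensity r₀ √(4 * D₂ * t) x := by
  rcases hx.eq_or_lt with rfl | hx
  · simp [fdist, distanceDensity]
  set σ := √(4 * D₂ * t)
  have hσ : 0 < σ := sqrt_pos.2 (by positivity)
  have hσ2 : σ ^ 2 = 4 * D₂ * t := sq_sqrt (by positivity)
  have hsqrt : √(π * D₂ * t) = √π * σ / 2 := by
    rw [show π * D₂ * t = π * (σ / 2) ^ 2 by rw [div_pow, hσ2]; ring, sqrt_mul pi_pos.le,
      sqrt_sq (by positivity), mul_div_assoc]
  have hsq {s : ℝ} (hs : s ^ 2 = r₀ ^ 2) :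
      -((x + s) / σ) ^ 2 = -(x ^ 2 + r₀ ^ 2) / (4 * D₂ * t) + -(s * x / (2 * D₂ * t)) := by
    rw [div_pow, hσ2, ← hs]; field_simp; ring
  rw [fdist, if_pos hx, hsqrt, sinh_eq, distanceDensity, sub_eq_add_neg x, hsq (neg_sq r₀),
    hsq rfl, neg_mul, neg_div (_ : ℝ) (r₀ * x), neg_neg, exp_add, exp_add]
  field_simp

lemma integral_fdist_eq_distanceCdf {r₀ D₂ t rbar : ℝ} (hr₀ : r₀ ≠ 0) (hD₂ : 0 < D₂) (ht : 0 < t)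
    (hrbar : 0 ≤ rbar) :
    ∫ x in (0 : ℝ)..rbar, fdist r₀ D₂ t x = distanceCdf r₀ √(4 * D₂ * t) rbar := by
  have hσ : √(4 * D₂ * t) ≠ 0 := (sqrt_pos.2 (by positivity)).ne'
  have hcont : Continuous (distanceDensity r₀ √(4 * D₂ * t)) := by
    unfold distanceDensity; fun_prop
  rw [intervalIntegral.integral_congr fun x hx =>
      fdist_eq_distanceDensity hD₂ ht (Set.uIcc_of_le hrbar ▸ hx).1,
    intervalIntegral.integral_eq_sub_of_hasDerivAt (fun x _ => hasDerivAt_distanceCdf hr₀ hσ x)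
      (hcont.intervalIntegrable _ _), distanceCdf_zero, sub_zero]

lemma hasDerivAt_const_div {𝕜 : Type*} [NontriviallyNormedField 𝕜] {σ : 𝕜} (hσ : σ ≠ 0)
    (k : 𝕜) : HasDerivAt (fun s : 𝕜 => k / s) (-(k / σ) / σ) σ := by
  convert (hasDerivAt_inv hσ).const_mul k using 1 <;> first | (ext; ring) | ring

lemma hasDerivAt_distanceCdf_sigma {r₀ σ x a b : ℝ} (hr₀ : r₀ ≠ 0) (hσ : σ ≠ 0)
    (ha : a = (x - r₀) / σ) (hb : b = (x + r₀) / σ) :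
    HasDerivAt (fun s => distanceCdf r₀ s x)
      (((1 + b * (a + b)) * exp (-b ^ 2) - (1 + a * (a + b)) * exp (-a ^ 2)) / (2 * r₀ * √π))
      σ := by
  have hexp (k : ℝ) : HasDerivAt (fun s : ℝ => exp (-(k / s) ^ 2))
      (exp (-(k / σ) ^ 2) * -(2 * (k / σ) * (-(k / σ) / σ))) σ := by
    simpa using ((hasDerivAt_const_div hσ k).fun_pow 2).fun_neg.exp
  have hgauss (k : ℝ) : HasDerivAt (fun s : ℝ => gaussPrimitive (k / s))
      (exp (-(k / σ) ^ 2) * (-(k / σ) / σ)) σ :=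
    (hasDerivAt_gaussPrimitive _).comp σ (hasDerivAt_const_div hσ k)
  have h := ((((hasDerivAt_id' σ).div_const (2 * r₀)).fun_mul
    ((hexp (x + r₀)).fun_sub (hexp (x - r₀)))).fun_add
    (hgauss (x - r₀))).fun_add (hgauss (x + r₀)) |>.div_const √π
  refine h.congr_deriv ?_
  have hπ : √π ≠ 0 := (sqrt_pos.2 pi_pos).ne'
  subst ha hb
  field_simp
  ring

lemma distanceCdf_antitoneOn_sigma {r₀ x : ℝ} (hr₀ : 0 < r₀) (hx : r₀ ≤ x) :
    AntitoneOn (fun σ => distanceCdf r₀ σ x) (Set.Ioi 0) := by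
  have hderiv {σ : ℝ} (hσ : σ ∈ Set.Ioi 0) :=
    hasDerivAt_distanceCdf_sigma (x := x) hr₀.ne' (ne_of_gt hσ) rfl rfl
  refine antitoneOn_of_deriv_nonpos (convex_Ioi 0)
    (fun σ hσ => (hderiv hσ).continuousAt.continuousWithinAt) ?_ ?_ <;> rw [interior_Ioi]
  · exact fun σ hσ => (hderiv hσ).differentiableAt.differentiableWithinAt
  · intro σ (hσ : 0 < σ)
    rw [(hderiv hσ).deriv]
    refine div_nonpos_of_nonpos_of_nonneg (sub_nonpos.2 ?_) (by positivity)
    exact one_add_mul_add_mul_exp_neg_sq_le (div_nonneg (by linarith) hσ.le)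
      (by gcongr; linarith)

/-- The probability that the transceiver distance does not exceed `r̄ ≥ r₀` is a
nonincreasing function of time. -/
theorem distance_cdf_antitone (r₀ D₂ rbar : ℝ) (hr₀ : 0 < r₀) (hD₂ : 0 < D₂)
    (hrbar : r₀ ≤ rbar) :
    AntitoneOn (fun t => ∫ x in (0:ℝ)..rbar, fdist r₀ D₂ t x) (Set.Ioi 0) := by
  have hσ_mono : MonotoneOn (fun t => √(4 * D₂ * t)) (Set.Ioi 0) :=
    fun _ _ _ _ hst => sqrt_le_sqrt (by gcongr)
  have hσ_pos : Set.MapsTo (fun t => √(4 * D₂ * t)) (Set.Ioi 0) (Set.Ioi 0) :=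
    fun t (ht : 0 < t) => sqrt_pos.2 (by positivity)
  refine ((distanceCdf_antitoneOn_sigma hr₀ hrbar).comp_MonotoneOn hσ_mono hσ_pos).congr ?_
  exact fun t ht => (integral_fdist_eq_distanceCdf hr₀.ne' hD₂ ht (hr₀.le.trans hrbar)).symm
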